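/- Let p ≥ 3 be an integer and σ₁ = (1 − cos(2π/p))/sin(2π/p). Let D¹₁ = {(z,w) ∈ S³ : Im z = σ₁·Re z and Re z > 0}, where S³ = {(z,w) ∈ ℂ² : |z|² + |w|² = 1}. If (z,w) ∈ D¹₁ and m ∈ ℤ are such that (e^{2πim/p}·z, e^{2πim/p}·w) ∈ D¹₁, then p divides m. Consequently, the quotient map S³ → S³/(ℤ/p) is injective on D¹₁. -/

import Mathlib

/-! If `(z, w)` and `(u z, u w)` both lie in `D¹₁` then `z` and `u z` lie on the same open ray
`Im = σ₁ Re, Re > 0` from the origin, so `u` is a positive real number; for `u = e^{2πim/p}`,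
which has modulus one, this forces `u = 1`, i.e. `p ∣ m`. -/

/-- The stratum `D¹₁ = {(z, w) ∈ S³ ⊆ ℂ² | Im z = σ₁ Re z, Re z > 0}`,
where `σ₁ = (1 - cos(2π/p))/sin(2π/p)`. -/
noncomputable def D11 (p : ℕ) : Set (ℂ × ℂ) :=
  {v | ‖v.1‖ ^ 2 + ‖v.2‖ ^ 2 = 1 ∧
    v.1.im = ((1 - Real.cos (2 * Real.pi / (p : ℝ))) /
      Real.sin (2 * Real.pi / (p : ℝ))) * v.1.re ∧
    0 < v.1.re}

open Complex ComplexOrder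

namespace Complex

theorem exp_two_pi_mul_I_mul_int_div_eq_one_iff {m : ℤ} {N : ℕ} (hN : N ≠ 0) :
    exp (2 * Real.pi * I * m / N) = 1 ↔ (N : ℤ) ∣ m := by
  rw [exp_eq_one_iff]
  conv in _ = _ => rw [← mul_comm (2 * Real.pi * I), mul_div_assoc, mul_right_inj' (by simp)]
  field_simp [Nat.cast_ne_zero.mpr hN]
  norm_cast

theorem norm_exp_two_pi_mul_I_mul_int_div (m : ℤ) (N : ℕ) :
    ‖exp (2 * Real.pi * I * m / N)‖ = 1 := by
  simp [norm_exp]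

theorem eq_one_of_pos_of_norm_eq_one {u : ℂ} (hu : 0 < u) (h : ‖u‖ = 1) : u = 1 := by
  rw [← norm_of_nonneg' hu.le, h, ofReal_one]

theorem pos_of_mul_mem_ray {σ : ℝ} {u z : ℂ} (hz : z.im = σ * z.re) (hz₀ : 0 < z.re)
    (huz : (u * z).im = σ * (u * z).re) (huz₀ : 0 < (u * z).re) : 0 < u := by
  rw [mul_im, mul_re] at huz
  rw [mul_re] at huz₀
  have hu_im : u.im = 0 := by
    have h : u.im * (z.re * (1 + σ ^ 2)) = 0 := by
      linear_combination huz - u.re * hz - σ * u.im * hz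
    exact (mul_eq_zero.mp h).resolve_right (by positivity)
  rw [hu_im, zero_mul, sub_zero] at huz₀
  exact pos_iff.mpr ⟨pos_of_mul_pos_left huz₀ hz₀.le, hu_im.symm⟩

end Complex

theorem eq_one_of_mul_mem_D11 {p : ℕ} {u z w : ℂ} (hu : ‖u‖ = 1) (h : (z, w) ∈ D11 p)
    (hu_mem : (u * z, u * w) ∈ D11 p) : u = 1 :=
  eq_one_of_pos_of_norm_eq_one (pos_of_mul_mem_ray h.2.1 h.2.2 hu_mem.2.1 hu_mem.2.2) hu

/-- Let `p ≥ 3`. If `(z, w) ∈ D¹₁` and `m ∈ ℤ` are such that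
`(e^{2πim/p} z, e^{2πim/p} w) ∈ D¹₁`, then `p ∣ m`. Consequently the quotient map
`S³ → S³/(ℤ/p)` is injective on `D¹₁`: two points of `D¹₁` in the same `ℤ/p`-orbit
are equal. -/
theorem stmt13 (p : ℕ) (hp : 3 ≤ p) :
    (∀ z w : ℂ, (z, w) ∈ D11 p → ∀ m : ℤ,
      (Complex.exp (2 * Real.pi * Complex.I * (m : ℂ) / (p : ℂ)) * z,
        Complex.exp (2 * Real.pi * Complex.I * (m : ℂ) / (p : ℂ)) * w) ∈ D11 p →
      (p : ℤ) ∣ m) ∧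
    ∀ v ∈ D11 p, ∀ v' ∈ D11 p,
      (∃ m : ℤ, (Complex.exp (2 * Real.pi * Complex.I * (m : ℂ) / (p : ℂ)) * v.1,
        Complex.exp (2 * Real.pi * Complex.I * (m : ℂ) / (p : ℂ)) * v.2) = v') →
      v = v' := by
  refine ⟨fun z w h m hm => ?_, ?_⟩
  · rw [← exp_two_pi_mul_I_mul_int_div_eq_one_iff (by omega : p ≠ 0)]
    exact eq_one_of_mul_mem_D11 (norm_exp_two_pi_mul_I_mul_int_div m p) h hm
  · rintro v hv v' hv' ⟨m, rfl⟩
    rw [eq_one_of_mul_mem_D11 (norm_exp_two_pi_mul_I_mul_int_div m p) hv hv', one_mul, one_mul]
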